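/- For every positive integer r, there exist rational numbers e_{r+1}, e_{r+2}, ..., e_{2r+2} with e_{2r+2} = (2r+3)/((r+1)(r+2)) and e_{2r+1} = 0 such that for every natural number n, S_r(n) * S_{r+1}(n) = \sum_{i=r+1}^{2r+2} e_i * S_i(n). -/
import Mathlib


/-- `S k n = ∑_{m=1}^n m^k` as a rational number. -/
def S (k n : ℕ) : ℚ := ∑ m ∈ Finset.Icc 1 n, (m : ℚ) ^ k

/-- Coefficients of the Faulhaber polynomial: `S k n = ∑_{j=1}^{k+1} a k j * n^j`. -/
noncomputable def a (k j : ℕ) : ℚ :=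
  bernoulli' (k + 1 - j) * ((k + 1).choose (k + 1 - j)) / (k + 1)

lemma a_self (k : ℕ) : a k k = 1 / 2 := by
  rw [a, show k + 1 - k = 1 from by omega, bernoulli'_one, Nat.choose_one_right]
  have hk : ((k : ℚ) + 1) ≠ 0 := by positivity
  push_cast
  field_simp

lemma a_top (k : ℕ) : a k (k + 1) = 1 / ((k : ℚ) + 1) := by
  rw [a, Nat.sub_self, bernoulli'_zero, Nat.choose_zero_right]
  push_cast
  ring

lemma S_poly (k n : ℕ) :
    S k n = ∑ j ∈ Finset.Icc 1 (k + 1), a k j * (n : ℚ) ^ j := by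
  have h : S k n = ∑ m ∈ Finset.Ico 1 (n + 1), (m : ℚ) ^ k := by
    rw [S, Nat.Icc_eq_range', Nat.Ico_eq_range']
  rw [h, sum_Ico_pow n k]
  refine Finset.sum_nbij' (fun i => k + 1 - i) (fun j => k + 1 - j) ?_ ?_ ?_ ?_ ?_
  · intro i hi; simp only [Finset.mem_range] at hi; simp only [Finset.mem_Icc]; omega
  · intro j hj; simp only [Finset.mem_Icc] at hj; simp only [Finset.mem_range]; omega
  · intro i hi; simp only [Finset.mem_range] at hi; omega
  · intro j hj; simp only [Finset.mem_Icc] at hj; omega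
  · intro i hi; simp only [Finset.mem_range] at hi
    have : k + 1 - (k + 1 - i) = i := by omega
    rw [a, this]
    ring

lemma S_succ (k n : ℕ) : S k (n + 1) = S k n + ((n : ℚ) + 1) ^ k := by
  rw [S, S, Finset.sum_Icc_succ_top (by omega)]
  push_cast; ring

/-- Abel-summation identity. -/
lemma key (r : ℕ) (n : ℕ) :
    S r n * S (r + 1) n + S (2 * r + 1) n =
      ∑ m ∈ Finset.Icc 1 n, ((m : ℚ) ^ r * S (r + 1) m + (m : ℚ) ^ (r + 1) * S r m) := by
  induction n with
  | zero => simp [S]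
  | succ n ih =>
      rw [Finset.sum_Icc_succ_top (by omega), ← ih, S_succ, S_succ, S_succ]
      have h2 : 2 * r + 1 = (r + 1) + r := by ring
      push_cast
      rw [h2, pow_add]
      ring

theorem prod_power_sum_expansion (r : ℕ) (hr : 0 < r) :
    ∃ e : ℕ → ℚ,
      e (2 * r + 2) = (2 * (r : ℚ) + 3) / (((r : ℚ) + 1) * ((r : ℚ) + 2)) ∧
      e (2 * r + 1) = 0 ∧
      ∀ n : ℕ, S r n * S (r + 1) n = ∑ i ∈ Finset.Icc (r + 1) (2 * r + 2), e i * S i n := by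
  refine ⟨fun i => a (r + 1) (i - r) + (if r + 2 ≤ i then a r (i - r - 1) else 0)
      - (if i = 2 * r + 1 then 1 else 0), ?_, ?_, ?_⟩
  · dsimp only
    rw [if_pos (by omega), if_neg (by omega),
      show 2 * r + 2 - r = (r + 1) + 1 from by omega,
      show r + 1 + 1 - 1 = r + 1 from by omega, a_top, a_top]
    have hr1 : ((r : ℚ) + 1) ≠ 0 := by positivity
    have hr2 : ((r : ℚ) + 2) ≠ 0 := by positivity
    push_cast
    field_simp
    ring
  · dsimp only
    rw [if_pos (by omega), if_pos rfl,
      show 2 * r + 1 - r = r + 1 from by omega,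
      show r + 1 - 1 = r from by omega, a_self, a_self]
    norm_num
  · intro n
    have hA : ∑ i ∈ Finset.Icc (r + 1) (2 * r + 2), a (r + 1) (i - r) * S i n =
        ∑ m ∈ Finset.Icc 1 n, (m : ℚ) ^ r * S (r + 1) m := by
      have : ∀ m ∈ Finset.Icc 1 n, (m : ℚ) ^ r * S (r + 1) m =
          ∑ j ∈ Finset.Icc 1 (r + 2), a (r + 1) j * (m : ℚ) ^ (j + r) := by
        intro m _
        rw [S_poly, Finset.mul_sum]
        exact Finset.sum_congr rfl fun j _ => by rw [pow_add]; ring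
      rw [Finset.sum_congr rfl this, Finset.sum_comm]
      refine Finset.sum_nbij' (fun i => i - r) (fun j => j + r) ?_ ?_ ?_ ?_ ?_
      · intro i hi; simp only [Finset.mem_Icc] at hi ⊢; omega
      · intro j hj; simp only [Finset.mem_Icc] at hj ⊢; omega
      · intro i hi; simp only [Finset.mem_Icc] at hi; omega
      · intro j hj; omega
      · intro i hi; simp only [Finset.mem_Icc] at hi
        have : i - r + r = i := by omega
        rw [S, Finset.mul_sum, this]
    have hB : ∑ i ∈ Finset.Icc (r + 1) (2 * r + 2),
          (if r + 2 ≤ i then a r (i - r - 1) else 0) * S i n =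
        ∑ m ∈ Finset.Icc 1 n, (m : ℚ) ^ (r + 1) * S r m := by
      have hsplit : Finset.Icc (r + 1) (2 * r + 2) =
          insert (r + 1) (Finset.Icc (r + 2) (2 * r + 2)) := by
        ext x; simp only [Finset.mem_Icc, Finset.mem_insert]; omega
      rw [hsplit, Finset.sum_insert (by simp only [Finset.mem_Icc]; omega)]
      rw [if_neg (by omega), zero_mul, zero_add]
      have hcong : ∀ i ∈ Finset.Icc (r + 2) (2 * r + 2),
          (if r + 2 ≤ i then a r (i - r - 1) else 0) * S i n = a r (i - r - 1) * S i n := by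
        intro i hi; simp only [Finset.mem_Icc] at hi; rw [if_pos hi.1]
      rw [Finset.sum_congr rfl hcong]
      have : ∀ m ∈ Finset.Icc 1 n, (m : ℚ) ^ (r + 1) * S r m =
          ∑ j ∈ Finset.Icc 1 (r + 1), a r j * (m : ℚ) ^ (j + r + 1) := by
        intro m _
        rw [S_poly, Finset.mul_sum]
        exact Finset.sum_congr rfl fun j _ => by rw [pow_add, pow_add]; ring
      rw [Finset.sum_congr rfl this, Finset.sum_comm]
      refine Finset.sum_nbij' (fun i => i - r - 1) (fun j => j + r + 1) ?_ ?_ ?_ ?_ ?_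
      · intro i hi; simp only [Finset.mem_Icc] at hi ⊢; omega
      · intro j hj; simp only [Finset.mem_Icc] at hj ⊢; omega
      · intro i hi; simp only [Finset.mem_Icc] at hi; omega
      · intro j hj; omega
      · intro i hi; simp only [Finset.mem_Icc] at hi
        have : i - r - 1 + r + 1 = i := by omega
        rw [S, Finset.mul_sum, this]
    have hC : ∑ i ∈ Finset.Icc (r + 1) (2 * r + 2),
        (if i = 2 * r + 1 then (1 : ℚ) else 0) * S i n = S (2 * r + 1) n := by
      have : ∀ i ∈ Finset.Icc (r + 1) (2 * r + 2),
          (if i = 2 * r + 1 then (1 : ℚ) else 0) * S i n =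
          if i = 2 * r + 1 then S (2 * r + 1) n else 0 := by
        intro i _
        by_cases h : i = 2 * r + 1
        · subst h; simp
        · simp [h]
      rw [Finset.sum_congr rfl this, Finset.sum_ite_eq' , if_pos]
      simp only [Finset.mem_Icc]; omega
    have hdist : ∑ i ∈ Finset.Icc (r + 1) (2 * r + 2),
        (a (r + 1) (i - r) + (if r + 2 ≤ i then a r (i - r - 1) else 0)
          - (if i = 2 * r + 1 then (1 : ℚ) else 0)) * S i n =
        (∑ i ∈ Finset.Icc (r + 1) (2 * r + 2), a (r + 1) (i - r) * S i n)
        + (∑ i ∈ Finset.Icc (r + 1) (2 * r + 2),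
            (if r + 2 ≤ i then a r (i - r - 1) else 0) * S i n)
        - ∑ i ∈ Finset.Icc (r + 1) (2 * r + 2),
            (if i = 2 * r + 1 then (1 : ℚ) else 0) * S i n := by
      rw [← Finset.sum_add_distrib, ← Finset.sum_sub_distrib]
      exact Finset.sum_congr rfl fun i _ => by ring
    have hk := key r n
    rw [Finset.sum_add_distrib] at hk
    rw [hdist, hA, hB, hC]
    linarith
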